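/- The total number of occurrences (copies) of a fixed binary tree pattern t with m leaves, summed over all full binary trees with n leaves, equals binomial(2n - m, n - m), for all n ≥ m ≥ 1. -/

import Mathlib

inductive BTree : Type
  | leaf : BTree
  | node : BTree → BTree → BTree
  deriving DecidableEq

namespace BTree

def leaves : BTree → ℕ
  | leaf => 1
  | node l r => leaves l + leaves r

def Matches : BTree → BTree → Bool
  | _, leaf => true
  | leaf, node _ _ => false
  | node l r, node tl tr => Matches l tl && Matches r tr

def Contains : BTree → BTree → Bool
  | leaf, t => Matches leaf t
  | node l r, t => Matches (node l r) t || Contains l t || Contains r t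

def Avoids (T t : BTree) : Prop := Contains T t = false

end BTree

namespace BTree

def copies (t : BTree) : BTree → ℕ
  | leaf => if Matches leaf t then 1 else 0
  | node l r => copies t l + copies t r + (if Matches (node l r) t then 1 else 0)

end BTree

/-!
Weight each tree by `X ^ leaves`. Splitting at the root, the series `c` of all trees satisfies
`c = X + c²`, and the trees matching an `m`-leaf pattern are the pattern with a tree grafted on
each leaf, so their series is `cᵐ`. A copy sits at the root or inside one of the two subtrees,
hence the series `F` of copies satisfies `F = cᵐ + 2cF`, i.e. `F (1 - 2c) = cᵐ`.

Differentiating `c = X + c²` gives `c' (1 - 2c) = 1`, and `c' = ∑ (2d choose d) Xᵈ` since the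
coefficients of `c` are Catalan numbers. As `c² = c - X`, both `cᵐ` and
`Xᵐ ∑ (2d + m choose d) Xᵈ · (1 - 2c)` satisfy `u (m + 2) = u (m + 1) - X u m` (the latter by
Pascal's rule), and they agree at `m = 0, 1`; cancelling `1 - 2c` gives
`F = Xᵐ ∑ (2d + m choose d) Xᵈ`.
-/

open Finset PowerSeries

namespace BTree

theorem one_le_leaves (T : BTree) : 1 ≤ T.leaves := by
  induction T with
  | leaf => rfl
  | node l r _ _ => simp only [leaves]; omega

def withLeaves : ℕ → Finset BTree
  | 0 => ∅
  | 1 => {leaf}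
  | n + 2 => (antidiagonal n).attach.biUnion fun p =>
      (withLeaves (p.1.1 + 1) ×ˢ withLeaves (p.1.2 + 1)).image fun lr => node lr.1 lr.2
decreasing_by all_goals have := HasAntidiagonal.mem_antidiagonal.1 p.2; omega

@[simp] theorem withLeaves_zero : withLeaves 0 = ∅ := by rw [withLeaves]

@[simp] theorem withLeaves_one : withLeaves 1 = {leaf} := by rw [withLeaves]

theorem mem_withLeaves {n : ℕ} {T : BTree} : T ∈ withLeaves n ↔ T.leaves = n := by
  induction n using Nat.strong_induction_on generalizing T with
  | _ n ih =>
    match n, T with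
    | 0, T => simpa using (Nat.one_le_iff_ne_zero.1 (one_le_leaves T))
    | 1, leaf => simp [leaves]
    | n + 2, leaf => simp [withLeaves, leaves]
    | 1, node l r =>
      have := one_le_leaves l
      have := one_le_leaves r
      simp only [withLeaves_one, mem_singleton, reduceCtorEq, false_iff, leaves]
      omega
    | n + 2, node l r =>
      have := one_le_leaves l
      have := one_le_leaves r
      simp only [withLeaves, mem_biUnion, mem_attach, mem_image, mem_product, true_and,
        Subtype.exists, HasAntidiagonal.mem_antidiagonal, Prod.exists, node.injEq, leaves]
      constructor
      · rintro ⟨i, j, hij, l', r', ⟨hl, hr⟩, rfl, rfl⟩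
        rw [ih _ (by omega)] at hl hr
        omega
      · intro h
        refine ⟨l.leaves - 1, r.leaves - 1, by omega, l, r, ⟨?_, ?_⟩, rfl, rfl⟩ <;>
          rw [ih _ (by omega)] <;> omega

theorem sum_withLeaves_add_two {M : Type*} [AddCommMonoid M] (f : BTree → M) (n : ℕ) :
    ∑ T ∈ withLeaves (n + 2), f T =
      ∑ p ∈ antidiagonal n, ∑ l ∈ withLeaves (p.1 + 1), ∑ r ∈ withLeaves (p.2 + 1), f (node l r) := by
  rw [withLeaves, sum_biUnion, ← sum_attach (antidiagonal n)]
  · refine sum_congr rfl fun p _ => ?_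
    rw [sum_image fun _ _ _ _ h => by simpa [Prod.ext_iff] using h, sum_product]
  · intro p _ q _ hpq
    simp only [Function.onFun, disjoint_left, mem_image, mem_product, not_exists, not_and]
    rintro _ ⟨⟨l, r⟩, ⟨hl, -⟩, rfl⟩ ⟨l', r'⟩ ⟨hl', -⟩ h
    simp only [node.injEq] at h
    obtain ⟨rfl, rfl⟩ := h
    rw [mem_withLeaves] at hl hl'
    have hp := HasAntidiagonal.mem_antidiagonal.1 p.2
    have hq := HasAntidiagonal.mem_antidiagonal.1 q.2
    exact hpq (Subtype.ext (Prod.ext (by omega) (by omega)))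

theorem card_withLeaves_succ (n : ℕ) : #(withLeaves (n + 1)) = catalan n := by
  induction n using Nat.strong_induction_on with
  | _ n ih =>
    match n with
    | 0 => simp
    | n + 1 =>
      rw [card_eq_sum_ones, sum_withLeaves_add_two, catalan_succ']
      refine sum_congr rfl fun p hp => ?_
      have hp := HasAntidiagonal.mem_antidiagonal.1 hp
      simp only [sum_const, smul_eq_mul, mul_one]
      rw [ih p.1 (by omega), ih p.2 (by omega), mul_comm]

section GeneratingFunction

variable {R : Type*} [CommSemiring R]

def gf (f : BTree → R) : R⟦X⟧ := mk fun n => ∑ T ∈ withLeaves n, f T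

@[simp] theorem constantCoeff_gf (f : BTree → R) : constantCoeff (gf f) = 0 := by
  simp [gf, ← coeff_zero_eq_constantCoeff_apply]

def nodeGf (φ : BTree → BTree → R) : R⟦X⟧ :=
  mk fun n => ∑ p ∈ antidiagonal n, ∑ l ∈ withLeaves p.1, ∑ r ∈ withLeaves p.2, φ l r

theorem gf_eq_C_mul_X_add_nodeGf (f : BTree → R) : gf f = C (f leaf) * X + nodeGf fun l r => f (node l r) := by
  ext (_ | _ | n)
  · simp [gf, nodeGf]
  · simp [gf, nodeGf, Finset.Nat.antidiagonal_succ]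
  · simp only [gf, nodeGf, coeff_mk, map_add]
    rw [Finset.Nat.sum_antidiagonal_succ, Finset.Nat.sum_antidiagonal_succ', sum_withLeaves_add_two]
    simp

theorem nodeGf_add (φ ψ : BTree → BTree → R) :
    nodeGf (fun l r => φ l r + ψ l r) = nodeGf φ + nodeGf ψ := by
  ext n
  simp [nodeGf, sum_add_distrib]

theorem nodeGf_mul (g h : BTree → R) : nodeGf (fun l r => g l * h r) = gf g * gf h := by
  ext n
  simp [nodeGf, gf, coeff_mul, sum_mul_sum]

theorem gf_one_eq_X_add_sq : gf (1 : BTree → R) = X + gf 1 ^ 2 := by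
  conv_lhs => rw [gf_eq_C_mul_X_add_nodeGf]
  rw [sq, ← nodeGf_mul]
  simp

theorem gf_matches_eq_pow (t : BTree) :
    gf (fun T => if Matches T t then (1 : R) else 0) = gf 1 ^ t.leaves := by
  induction t with
  | leaf =>
    have : ∀ T, Matches T leaf = true := by intro T; cases T <;> rfl
    simp only [this, if_true, leaves, pow_one]
    rfl
  | node t₁ t₂ ih₁ ih₂ =>
    rw [gf_eq_C_mul_X_add_nodeGf, leaves, pow_add, ← ih₁, ← ih₂, ← nodeGf_mul]
    simp only [Matches, Bool.and_eq_true, ite_and, boole_mul]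
    simp

theorem gf_copies_eq_pow_add (t : BTree) :
    gf (fun T => (copies t T : R)) = gf 1 ^ t.leaves + 2 * gf 1 * gf (fun T => (copies t T : R)) := by
  have hchildren : 2 * gf 1 * gf (fun T => (copies t T : R)) =
      nodeGf fun l r => (copies t l : R) * 1 + 1 * copies t r := by
    rw [nodeGf_add, nodeGf_mul, nodeGf_mul, ← Pi.one_def]
    ring
  rw [hchildren, ← gf_matches_eq_pow, gf_eq_C_mul_X_add_nodeGf, gf_eq_C_mul_X_add_nodeGf (fun T => if Matches T t then 1 else 0), add_assoc,
    ← nodeGf_add]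
  simp only [copies, Nat.cast_add, Nat.cast_ite, Nat.cast_one, Nat.cast_zero, mul_one, one_mul]
  congr 2
  ext l r
  ring

end GeneratingFunction

def chooseSeries (m : ℕ) : ℤ⟦X⟧ := mk fun d => ((2 * d + m).choose d : ℤ)

theorem derivative_gf_one : d⁄dX ℤ (gf 1) = chooseSeries 0 := by
  ext n
  rw [coeff_derivative]
  simp only [gf, chooseSeries, coeff_mk, Pi.one_apply, sum_const, card_withLeaves_succ,
    nsmul_eq_mul, mul_one, add_zero]
  exact_mod_cast (mul_comm _ _).trans (succ_mul_catalan_eq_centralBinom n)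

theorem chooseSeries_zero_mul_eq_one : chooseSeries 0 * (1 - 2 * gf 1) = 1 := by
  have h := congrArg (d⁄dX ℤ) (gf_one_eq_X_add_sq (R := ℤ))
  simp only [map_add, derivative_X, Derivation.leibniz_pow, derivative_gf_one] at h
  linear_combination h

theorem X_mul_chooseSeries_add_two (m : ℕ) :
    X * chooseSeries (m + 2) = chooseSeries (m + 1) - chooseSeries m := by
  ext (_ | d)
  · simp [chooseSeries]
  · simp only [coeff_succ_X_mul, chooseSeries, coeff_mk, map_sub]
    rw [show 2 * (d + 1) + (m + 1) = (2 * d + m + 2) + 1 by ring, Nat.choose_succ_succ,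
      show 2 * d + (m + 2) = 2 * d + m + 2 by ring, show 2 * (d + 1) + m = 2 * d + m + 2 by ring]
    push_cast
    ring

theorem two_mul_X_mul_chooseSeries_one : 2 * X * chooseSeries 1 = chooseSeries 0 - 1 := by
  ext (_ | d)
  · simp [chooseSeries]
  · rw [mul_assoc, ← map_ofNat C 2, coeff_C_mul, coeff_succ_X_mul]
    simp only [chooseSeries, coeff_mk, map_sub, coeff_one, Nat.add_one_ne_zero, if_false, sub_zero]
    rw [show 2 * (d + 1) = (2 * d + 1) + 1 by ring, Nat.choose_succ_succ, Nat.choose_symm_half]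
    push_cast
    ring

theorem X_pow_mul_chooseSeries_mul_eq_pow (m : ℕ) :
    X ^ m * chooseSeries m * (1 - 2 * gf 1) = gf 1 ^ m := by
  induction m using Nat.twoStepInduction with
  | zero => simpa using chooseSeries_zero_mul_eq_one
  | one =>
    have h2 : (2 : ℤ⟦X⟧) ≠ 0 := by
      rw [← map_ofNat C 2]
      exact (map_ne_zero_iff _ C_injective).2 two_ne_zero
    refine mul_left_cancel₀ h2 ?_
    linear_combination (1 - 2 * gf 1) * two_mul_X_mul_chooseSeries_one + chooseSeries_zero_mul_eq_one
  | more m ih₀ ih₁ =>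
    linear_combination X ^ (m + 1) * (1 - 2 * gf 1) * X_mul_chooseSeries_add_two m + ih₁ - X * ih₀
      + (gf 1 : ℤ⟦X⟧) ^ m * gf_one_eq_X_add_sq (R := ℤ)

theorem gf_copies_eq_X_pow_mul_chooseSeries (t : BTree) :
    gf (fun T => (copies t T : ℤ)) = X ^ t.leaves * chooseSeries t.leaves := by
  have hunit : (1 - 2 * gf 1 : ℤ⟦X⟧) ≠ 0 := ne_of_apply_ne (coeff 0) (by simp)
  refine mul_right_cancel₀ hunit ?_
  rw [X_pow_mul_chooseSeries_mul_eq_pow]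
  linear_combination gf_copies_eq_pow_add (R := ℤ) t

theorem sum_copies_withLeaves (t : BTree) (d : ℕ) :
    ∑ T ∈ withLeaves (t.leaves + d), copies t T = (2 * d + t.leaves).choose d := by
  have h := congrArg (coeff (d + t.leaves)) (gf_copies_eq_X_pow_mul_chooseSeries t)
  rw [coeff_X_pow_mul, add_comm] at h
  simp only [gf, chooseSeries, coeff_mk] at h
  exact_mod_cast h

end BTree

theorem stmt_14_general (t : BTree) (m n : ℕ) (hm : t.leaves = m)
    (hmn : m ≤ n) :
    ∑ᶠ T ∈ {T : BTree | T.leaves = n}, BTree.copies t T =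
      Nat.choose (2 * n - m) (n - m) := by
  obtain ⟨d, rfl⟩ := Nat.exists_eq_add_of_le hmn
  have hset : {T : BTree | T.leaves = m + d} = ↑(BTree.withLeaves (m + d)) := by
    ext T
    simp [BTree.mem_withLeaves]
  rw [hset, finsum_mem_coe_finset, ← hm, BTree.sum_copies_withLeaves]
  congr 1 <;> omega

theorem stmt_14 (t : BTree) (m n : ℕ) (hm : t.leaves = m) (hm1 : 1 ≤ m)
    (hmn : m ≤ n) :
    ∑ᶠ T ∈ {T : BTree | T.leaves = n}, BTree.copies t T =
      Nat.choose (2 * n - m) (n - m) :=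
  stmt_14_general t m n hm hmn
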